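/- Let f : F_2^k → S be a function, t ≥ 1, and let x₁, …, x_M be M distinct vectors in F_2^k. Then r^f_ID(k, t) ≥ N^(1)_ID(I_f^(1)(t, x₁, …, x_M)). -/

import Mathlib

/-- Length of a longest common subsequence of two binary words. -/
noncomputable def lcsLen (x y : List Bool) : ℕ :=
  sSup {n | ∃ z : List Bool, z.length = n ∧ z.Sublist x ∧ z.Sublist y}

/-- The insdel distance `d_ID(x,y) = |x| + |y| - 2·LCS(x,y)`. -/
noncomputable def dID (x y : List Bool) : ℕ :=
  x.length + y.length - 2 * lcsLen x y

/-- Number of runs (maximal blocks of consecutive equal symbols) of a binary word. -/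
def runs (x : List Bool) : ℕ := (x.destutter (· ≠ ·)).length

/-- Maximum run length of a binary word: the largest `n` such that some constant
word of length `n` occurs as a block of consecutive symbols of `x`. -/
noncomputable def maxRun (x : List Bool) : ℕ :=
  sSup {n | ∃ b : Bool, (List.replicate n b).IsInfix x}

/-- `D_t(x)`: the words of length `|x| - t` that are subsequences of `x`. -/
def Dset (t : ℕ) (x : List Bool) : Set (List Bool) :=
  {z | z.length = x.length - t ∧ z.Sublist x}

/-- `I_t(x)`: the words of length `|x| + t` that are supersequences of `x`. -/
def Iset (t : ℕ) (x : List Bool) : Set (List Bool) :=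
  {z | z.length = x.length + t ∧ x.Sublist z}

/-- A systematic encoding `x ↦ (x, p(x))` with redundancy words `p x` of length `r`
is a function-correcting insdel code for `f` correcting `t` insdel errors. -/
noncomputable def IsFCIDC {k : ℕ} {S : Type*} (f : (Fin k → Bool) → S) (t r : ℕ)
    (p : (Fin k → Bool) → List Bool) : Prop :=
  (∀ x, (p x).length = r) ∧
  ∀ x y, f x ≠ f y → 2 * t < dID (List.ofFn x ++ p x) (List.ofFn y ++ p y)

/-- The optimal redundancy `r^f_ID(k,t)`. -/
noncomputable def optRed {k : ℕ} {S : Type*} (f : (Fin k → Bool) → S) (t : ℕ) : ℕ :=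
  sInf {r | ∃ p, IsFCIDC f t r p}

/-- `p` is an irregular insdel-distance code of length `r` for the matrix `I`. -/
noncomputable def IsIrregularCode {M : ℕ} (I : Fin M → Fin M → ℕ) (r : ℕ)
    (p : Fin M → List Bool) : Prop :=
  (∀ i, (p i).length = r) ∧ ∀ i j, I i j ≤ dID (p i) (p j)

/-- `N^(1)_ID(I)`: least length of an irregular insdel-distance code for `I`. -/
noncomputable def N1 {M : ℕ} (I : Fin M → Fin M → ℕ) : ℕ :=
  sInf {r | ∃ p, IsIrregularCode I r p}

/-- `N^(2)_ID(I; K)`: least length `r ≥ K` of an irregular insdel-distance code for `I`. -/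
noncomputable def N2 {M : ℕ} (I : Fin M → Fin M → ℕ) (K : ℕ) : ℕ :=
  sInf {r | K ≤ r ∧ ∃ p, IsIrregularCode I r p}

-- The insdel distance matrix `I_f^(1)(t, x₁, …, x_M)`.
open Classical in
noncomputable def Imat1 {k M : ℕ} {S : Type*} (f : (Fin k → Bool) → S) (t : ℕ)
    (x : Fin M → Fin k → Bool) : Fin M → Fin M → ℕ :=
  fun i j => if f (x i) ≠ f (x j) then
    2 * t + 2 - dID (List.ofFn (x i)) (List.ofFn (x j)) else 0

-- The insdel distance matrix `I_f^(2)(t, x₁, …, x_M)`.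
open Classical in
noncomputable def Imat2 {k M : ℕ} {S : Type*} (f : (Fin k → Bool) → S) (t : ℕ)
    (x : Fin M → Fin k → Bool) : Fin M → Fin M → ℕ :=
  fun i j => if f (x i) ≠ f (x j) then
    2 * t + 2 + 2 * k - dID (List.ofFn (x i)) (List.ofFn (x j)) else 0

/-- The function distance `d^f_ID(a,b)`. -/
noncomputable def dfID {k : ℕ} {S : Type*} (f : (Fin k → Bool) → S) (a b : S) : ℕ :=
  sInf {d | ∃ x y : Fin k → Bool, f x = a ∧ f y = b ∧ dID (List.ofFn x) (List.ofFn y) = d}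

/-- The function distance matrix `I_f^(2)(t, f₁, …, f_E)`, with entries
`max(2(t+1+k) − d^f_ID(f_i, f_j), 0)` off the diagonal and `0` on the diagonal. -/
noncomputable def funMat2 {k E : ℕ} {S : Type*} (f : (Fin k → Bool) → S) (t : ℕ)
    (fs : Fin E → S) : Fin E → Fin E → ℕ :=
  fun i j => if i = j then 0 else 2 * (t + 1 + k) - dfID f (fs i) (fs j)

/-- The uniform `M × M` matrix with off-diagonal entries `d` and zero diagonal. -/
def uniMat (M d : ℕ) : Fin M → Fin M → ℕ := fun i j => if i = j then 0 else d

/-- The number-of-runs function on `F_2^k`. -/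
def runsFn (k : ℕ) (x : Fin k → Bool) : ℕ := runs (List.ofFn x)

/-- The VT-syndrome function `f(x) = Σ_{j=1}^k j·x_j mod (k+1)`. -/
def vtFn (k : ℕ) (x : Fin k → Bool) : ℕ :=
  (∑ j : Fin k, ((j : ℕ) + 1) * (if x j then 1 else 0)) % (k + 1)

/-- The function ball `B^f_ID(u, ρ) = f(B_ID(u, ρ))`. -/
def fball {k : ℕ} {S : Type*} (f : (Fin k → Bool) → S) (u : Fin k → Bool) (ρ : ℕ) : Set S :=
  f '' {v : Fin k → Bool | dID (List.ofFn u) (List.ofFn v) ≤ ρ}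

/-- `V_ID(r, d)`: the maximum size of an insdel ball of (integer) radius `d`
among centers in `F_2^r`. -/
noncomputable def Vid (r : ℕ) (d : ℤ) : ℕ :=
  sSup (Set.range fun x : Fin r → Bool =>
    Nat.card {y : Fin r → Bool | (dID (List.ofFn x) (List.ofFn y) : ℤ) ≤ d})


/-!
The redundancy words `p(x₁), …, p(x_M)` of any function-correcting code for `f` form an irregular
insdel-distance code for `I_f^(1)`: since `d_ID(u ++ v, u' ++ v') ≤ d_ID(u, u') + d_ID(v, v')`,
they must make up for `2t + 1 - d_ID(xᵢ, xⱼ)`, and as insdel distances between words of equal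
length are even this is `2t + 2 - d_ID(xᵢ, xⱼ)`. The infimum `r^f_ID(k, t)` is attained because some
function-correcting code exists: a unary encoding of the index of `x` among all `2^k` words,
stretched by a factor `t + 1`, separates any two inputs by distance at least `2t + 2`.
-/

open List

section LCS

variable {x y z : List Bool}

lemma lcsLen_set_bddAbove (x y : List Bool) :
    BddAbove {n | ∃ z : List Bool, z.length = n ∧ z.Sublist x ∧ z.Sublist y} :=
  ⟨x.length, by rintro n ⟨z, rfl, hzx, -⟩; exact hzx.length_le⟩

lemma exists_sublist_length_eq_lcsLen (x y : List Bool) :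
    ∃ z : List Bool, z.length = lcsLen x y ∧ z.Sublist x ∧ z.Sublist y :=
  Nat.sSup_mem (s := {n | ∃ z : List Bool, z.length = n ∧ z.Sublist x ∧ z.Sublist y})
    ⟨0, [], rfl, nil_sublist _, nil_sublist _⟩ (lcsLen_set_bddAbove x y)

lemma length_le_lcsLen (hzx : z.Sublist x) (hzy : z.Sublist y) : z.length ≤ lcsLen x y :=
  le_csSup (lcsLen_set_bddAbove x y) ⟨z, rfl, hzx, hzy⟩

lemma lcsLen_le {n : ℕ} (h : ∀ z : List Bool, z.Sublist x → z.Sublist y → z.length ≤ n) :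
    lcsLen x y ≤ n := by
  obtain ⟨z, hz, hzx, hzy⟩ := exists_sublist_length_eq_lcsLen x y
  exact hz ▸ h z hzx hzy

lemma lcsLen_le_length_left (x y : List Bool) : lcsLen x y ≤ x.length :=
  lcsLen_le fun _ hzx _ => hzx.length_le

lemma lcsLen_le_length_right (x y : List Bool) : lcsLen x y ≤ y.length :=
  lcsLen_le fun _ _ hzy => hzy.length_le

lemma lcsLen_comm (x y : List Bool) : lcsLen x y = lcsLen y x := by
  simp only [lcsLen, and_comm]

lemma lcsLen_le_min_count (x y : List Bool) :
    lcsLen x y ≤ min (x.count true) (y.count true) + min (x.count false) (y.count false) :=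
  lcsLen_le fun z hzx hzy => by
    have := z.count_true_add_count_false
    have := hzx.count_le true
    have := hzy.count_le true
    have := hzx.count_le false
    have := hzy.count_le false
    omega

lemma lcsLen_append_le {a c : List Bool} (b d : List Bool) (hac : a.length = c.length) :
    lcsLen (a ++ b) (c ++ d) ≤ a.length + lcsLen b d := by
  refine lcsLen_le fun z hz₁ hz₂ => ?_
  obtain ⟨z₁, z₂, rfl, hz₁a, hz₂b⟩ := sublist_append_iff.mp hz₁
  obtain ⟨w₁, w₂, hw, hw₁c, hw₂d⟩ := sublist_append_iff.mp hz₂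
  -- the common subsequence splits at different places in the two words; cut at the later one
  rcases append_eq_append_iff.mp hw with ⟨u, rfl, rfl⟩ | ⟨u, rfl, rfl⟩
  · have := length_le_lcsLen ((sublist_append_right u w₂).trans hz₂b) hw₂d
    have := hw₁c.length_le
    simp only [length_append] at *
    omega
  · have := length_le_lcsLen hz₂b ((sublist_append_right u z₂).trans hw₂d)
    have := hz₁a.length_le
    simp only [length_append] at *
    omega

end LCS

section InsdelDistance

variable {x y : List Bool}

lemma dID_comm (x y : List Bool) : dID x y = dID y x := by
  rw [dID, dID, lcsLen_comm, Nat.add_comm]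

lemma even_dID_of_length_eq (h : x.length = y.length) : Even (dID x y) :=
  ⟨x.length - lcsLen x y, by have := lcsLen_le_length_left x y; unfold dID; omega⟩

lemma dID_append_le_add (a b c d : List Bool) :
    dID (a ++ b) (c ++ d) ≤ dID a c + dID b d := by
  obtain ⟨z₁, hz₁, hz₁a, hz₁c⟩ := exists_sublist_length_eq_lcsLen a c
  obtain ⟨z₂, hz₂, hz₂b, hz₂d⟩ := exists_sublist_length_eq_lcsLen b d
  have := length_le_lcsLen (hz₁a.append hz₂b) (hz₁c.append hz₂d)
  have := lcsLen_le_length_left a c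
  have := lcsLen_le_length_right a c
  have := lcsLen_le_length_left b d
  have := lcsLen_le_length_right b d
  simp only [dID, length_append] at *
  omega

lemma dID_le_dID_append {a c : List Bool} (b d : List Bool) (hac : a.length = c.length) :
    dID b d ≤ dID (a ++ b) (c ++ d) := by
  have := lcsLen_append_le b d hac
  have := lcsLen_le_length_left b d
  have := lcsLen_le_length_right b d
  simp only [dID, length_append]
  omega

lemma two_mul_count_true_sub_le_dID (h : x.length = y.length) :
    2 * (x.count true - y.count true) ≤ dID x y := by
  have := lcsLen_le_min_count x y
  have := x.count_true_add_count_false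
  have := y.count_true_add_count_false
  unfold dID
  omega

end InsdelDistance

def unaryWord (s N n : ℕ) : List Bool :=
  replicate (s * n) true ++ replicate (s * (N - n)) false

lemma length_unaryWord {s N n : ℕ} (hn : n ≤ N) : (unaryWord s N n).length = s * N := by
  rw [unaryWord, length_append, length_replicate, length_replicate, ← Nat.mul_add,
    Nat.add_sub_cancel' hn]

lemma count_true_unaryWord (s N n : ℕ) : (unaryWord s N n).count true = s * n := by
  simp [unaryWord, count_replicate]

lemma two_mul_le_dID_unaryWord {s N n m : ℕ} (hn : n ≤ N) (hm : m ≤ N) (hnm : n ≠ m) :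
    2 * s ≤ dID (unaryWord s N n) (unaryWord s N m) := by
  have key : ∀ {n m}, n ≤ N → m ≤ N → m < n →
      2 * s ≤ dID (unaryWord s N n) (unaryWord s N m) := fun hn hm hlt => by
    have := two_mul_count_true_sub_le_dID
      ((length_unaryWord (s := s) hn).trans (length_unaryWord hm).symm)
    rw [count_true_unaryWord, count_true_unaryWord, ← Nat.mul_sub] at this
    nlinarith [Nat.sub_pos_of_lt hlt]
  rcases Nat.lt_or_gt_of_ne hnm with h | h
  · exact dID_comm _ _ ▸ key hm hn h
  · exact key hn hm h

lemma exists_isFCIDC {k : ℕ} {S : Type*} (f : (Fin k → Bool) → S) (t : ℕ) :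
    ∃ r p, IsFCIDC f t r p := by
  set N := Fintype.card (Fin k → Bool)
  let e := Fintype.equivFin (Fin k → Bool)
  refine ⟨(t + 1) * N, fun x => unaryWord (t + 1) N (e x), fun x => length_unaryWord (e x).isLt.le,
    fun x y hf => ?_⟩
  have hne : (e x : ℕ) ≠ e y := fun h => hf (congrArg f (e.injective (Fin.ext h)))
  calc 2 * t < 2 * (t + 1) := by omega
    _ ≤ dID (unaryWord (t + 1) N (e x)) (unaryWord (t + 1) N (e y)) :=
      two_mul_le_dID_unaryWord (e x).isLt.le (e y).isLt.le hne
    _ ≤ _ := dID_le_dID_append _ _ (by simp)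

lemma IsFCIDC.isIrregularCode_Imat1 {k M r : ℕ} {S : Type*} {f : (Fin k → Bool) → S} {t : ℕ}
    {p : (Fin k → Bool) → List Bool} (hp : IsFCIDC f t r p) (x : Fin M → Fin k → Bool) :
    IsIrregularCode (Imat1 f t x) r (p ∘ x) := by
  refine ⟨fun i => hp.1 (x i), fun i j => ?_⟩
  unfold Imat1
  split_ifs with h
  · have hψ := hp.2 (x i) (x j) h
    have hsub := dID_append_le_add (ofFn (x i)) (p (x i)) (ofFn (x j)) (p (x j))
    obtain ⟨m, hm⟩ := even_dID_of_length_eq (x := ofFn (x i) ++ p (x i))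
      (y := ofFn (x j) ++ p (x j)) (by simp [hp.1])
    simp only [Function.comp_apply]
    omega
  · exact Nat.zero_le _

theorem stmt5_general {S : Type*} (k t M : ℕ) (f : (Fin k → Bool) → S)
    (x : Fin M → Fin k → Bool) :
    N1 (Imat1 f t x) ≤ optRed f t := by
  obtain ⟨r, p, hp⟩ := exists_isFCIDC f t
  obtain ⟨q, hq⟩ : ∃ q, IsFCIDC f t (optRed f t) q := Nat.sInf_mem (s := {r | ∃ p, IsFCIDC f t r p}) ⟨r, p, hp⟩
  exact Nat.sInf_le ⟨q ∘ x, hq.isIrregularCode_Imat1 x⟩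

theorem stmt5 {S : Type*} (k t M : ℕ) (ht : 1 ≤ t) (f : (Fin k → Bool) → S)
    (x : Fin M → Fin k → Bool) (hx : Function.Injective x) :
    N1 (Imat1 f t x) ≤ optRed f t :=
  stmt5_general k t M f x
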